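/- arXiv:1411.3665 — 7 statements merged into one kernel-verified Lean document; each statement's English description precedes it below -/
import Mathlib

section
/- For every anisotropy parameter ν ∈ (-1,1) and all complex numbers p⁺ₓ, p⁺ᵧ, p⁻ₓ, p⁻ᵧ, the p-wave kinetic energy density e = |p⁺ₓ|² + |p⁺ᵧ|² + |p⁻ₓ|² + |p⁻ᵧ|² + (1+ν)[p⁺ₓ·p⁻ₓ − p⁺ᵧ·p⁻ᵧ] + (1−ν)[p⁻ₓ∧p⁺ᵧ − p⁺ₓ∧p⁻ᵧ] satisfies the sum-of-squares identity e = (1+ν)/2·|p⁺ₓ + p⁻ₓ|² + (1+ν)/2·|p⁺ᵧ − p⁻ᵧ|² + (1−ν)/2·|p⁺ᵧ + i p⁻ₓ|² + (1−ν)/2·|p⁺ₓ + i p⁻ᵧ|²; in particular e ≥ 0. -/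
/-- Real dot product of complex numbers viewed as vectors in ℝ². -/
noncomputable def cdot (a b : ℂ) : ℝ := a.re * b.re + a.im * b.im

/-- Wedge product of complex numbers viewed as vectors in ℝ². -/
noncomputable def cwedge (a b : ℂ) : ℝ := a.re * b.im - a.im * b.re

/-- The p-wave kinetic energy density built from the values of the
partial derivatives `∂ₓη₊, ∂ᵧη₊, ∂ₓη₋, ∂ᵧη₋`. -/
noncomputable def ekinDensity (ν : ℝ) (ppx ppy pmx pmy : ℂ) : ℝ :=
  ‖ppx‖ ^ 2 + ‖ppy‖ ^ 2 + ‖pmx‖ ^ 2 + ‖pmy‖ ^ 2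
    + (1 + ν) * (cdot ppx pmx - cdot ppy pmy)
    + (1 - ν) * (cwedge pmx ppy - cwedge ppx pmy)

/-! Expanding the four squares, the dot products reproduce the `(1 + ν)` term and,
since `cdot a (I * b) = -cwedge a b`, the cross terms of the rotated squares reproduce
the `(1 - ν)` term; the squared norms add up with total weight `(1 + ν) + (1 - ν) = 2`.
For `ν ∈ (-1, 1)` all weights are nonnegative. -/

theorem real_inner_eq_cdot (a b : ℂ) : inner ℝ a b = cdot a b := by
  rw [Complex.inner, cdot, Complex.mul_re, Complex.conj_re, Complex.conj_im]
  ring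

theorem cwedge_swap (a b : ℂ) : cwedge b a = -cwedge a b := by
  unfold cwedge
  ring

theorem cdot_I_mul (a b : ℂ) : cdot a (Complex.I * b) = -cwedge a b := by
  simp only [cdot, cwedge, Complex.mul_re, Complex.mul_im, Complex.I_re, Complex.I_im]
  ring

theorem norm_add_sq_eq_cdot (a b : ℂ) : ‖a + b‖ ^ 2 = ‖a‖ ^ 2 + 2 * cdot a b + ‖b‖ ^ 2 := by
  rw [norm_add_sq_real, real_inner_eq_cdot]

theorem norm_sub_sq_eq_cdot (a b : ℂ) : ‖a - b‖ ^ 2 = ‖a‖ ^ 2 - 2 * cdot a b + ‖b‖ ^ 2 := by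
  rw [norm_sub_sq_real, real_inner_eq_cdot]

theorem norm_add_I_mul_sq (a b : ℂ) :
    ‖a + Complex.I * b‖ ^ 2 = ‖a‖ ^ 2 - 2 * cwedge a b + ‖b‖ ^ 2 := by
  rw [norm_add_sq_eq_cdot, cdot_I_mul, norm_mul, Complex.norm_I, one_mul]
  ring

theorem ekinDensity_eq_sum_sq (ν : ℝ) (ppx ppy pmx pmy : ℂ) :
    ekinDensity ν ppx ppy pmx pmy
      = (1 + ν) / 2 * ‖ppx + pmx‖ ^ 2
        + (1 + ν) / 2 * ‖ppy - pmy‖ ^ 2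
        + (1 - ν) / 2 * ‖ppy + Complex.I * pmx‖ ^ 2
        + (1 - ν) / 2 * ‖ppx + Complex.I * pmy‖ ^ 2 := by
  rw [ekinDensity, norm_add_sq_eq_cdot, norm_sub_sq_eq_cdot, norm_add_I_mul_sq,
    norm_add_I_mul_sq, cwedge_swap pmx ppy]
  ring

theorem stmt0 (ν : ℝ) (hν : ν ∈ Set.Ioo (-1 : ℝ) 1) (ppx ppy pmx pmy : ℂ) :
    ekinDensity ν ppx ppy pmx pmy
      = (1 + ν) / 2 * ‖ppx + pmx‖ ^ 2
        + (1 + ν) / 2 * ‖ppy - pmy‖ ^ 2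
        + (1 - ν) / 2 * ‖ppy + Complex.I * pmx‖ ^ 2
        + (1 - ν) / 2 * ‖ppx + Complex.I * pmy‖ ^ 2
    ∧ 0 ≤ ekinDensity ν ppx ppy pmx pmy := by
  have hplus : 0 ≤ (1 + ν) / 2 := by linarith [hν.1]
  have hminus : 0 ≤ (1 - ν) / 2 := by linarith [hν.2]
  refine ⟨ekinDensity_eq_sum_sq ν ppx ppy pmx pmy, ?_⟩
  rw [ekinDensity_eq_sum_sq]
  have := mul_nonneg hplus (sq_nonneg ‖ppx + pmx‖)
  have := mul_nonneg hplus (sq_nonneg ‖ppy - pmy‖)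
  have := mul_nonneg hminus (sq_nonneg ‖ppy + Complex.I * pmx‖)
  have := mul_nonneg hminus (sq_nonneg ‖ppx + Complex.I * pmy‖)
  linarith
end

section
/- Let Ω ⊂ ℝ² be a nonempty open convex set, let ν ∈ (-1,1), and let η = (η₋, η₊) : Ω → ℂ² be smooth. If the p-wave kinetic energy density e_kin(η) = |∇η₊|² + |∇η₋|² + (1+ν)[∂ₓη₊·∂ₓη₋ − ∂ᵧη₊·∂ᵧη₋] + (1−ν)[∂ₓη₋∧∂ᵧη₊ − ∂ₓη₊∧∂ᵧη₋] vanishes identically on Ω, then there exist complex constants c₊, c₋, α such that η₊(z) = c₊ + αz and η₋(z) = c₋ − α z̄ for all z ∈ Ω (identifying points of Ω with complex numbers z = x + iy). -/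
/-- The partial derivative ∂ₓη at z (identifying ℝ² with ℂ). -/
noncomputable def px (η : ℂ → ℂ) (z : ℂ) : ℂ := fderiv ℝ η z 1

/-- The partial derivative ∂ᵧη at z (identifying ℝ² with ℂ). -/
noncomputable def py (η : ℂ → ℂ) (z : ℂ) : ℂ := fderiv ℝ η z Complex.I

/-- The p-wave kinetic energy density of a pair `(η₋, η₊)` at a point `z`. -/
noncomputable def ekin (ν : ℝ) (ηm ηp : ℂ → ℂ) (z : ℂ) : ℝ :=
  ‖px ηp z‖ ^ 2 + ‖py ηp z‖ ^ 2
    + ‖px ηm z‖ ^ 2 + ‖py ηm z‖ ^ 2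
    + (1 + ν) * (cdot (px ηp z) (px ηm z) - cdot (py ηp z) (py ηm z))
    + (1 - ν) * (cwedge (px ηm z) (py ηp z) - cwedge (px ηp z) (py ηm z))

set_option maxHeartbeats 1000000 in
private lemma pointwise_alg {ν : ℝ} (hν1 : -1 < ν) (hν2 : ν < 1) (a b g h : ℂ)
    (H : ‖a‖ ^ 2 + ‖b‖ ^ 2 + ‖g‖ ^ 2 + ‖h‖ ^ 2
      + (1 + ν) * (cdot a g - cdot b h) + (1 - ν) * (cwedge g b - cwedge a h) = 0) :
    g = -a ∧ h = b ∧ b = Complex.I * a := by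
  simp only [Complex.sq_norm, Complex.normSq_apply, cdot, cwedge] at H
  have key : (1+ν)/2 * ((a.re+g.re)^2+(a.im+g.im)^2+(b.re-h.re)^2+(b.im-h.im)^2)
      + (1-ν)/2 * ((g.re+b.im)^2+(g.im-b.re)^2+(a.re-h.im)^2+(a.im+h.re)^2) = 0 := by
    linear_combination H
  have c1 : (0:ℝ) < (1+ν)/2 := by linarith
  have c2 : (0:ℝ) < (1-ν)/2 := by linarith
  have ht1 : 0 ≤ (a.re+g.re)^2+(a.im+g.im)^2+(b.re-h.re)^2+(b.im-h.im)^2 := by positivity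
  have ht2 : 0 ≤ (g.re+b.im)^2+(g.im-b.re)^2+(a.re-h.im)^2+(a.im+h.re)^2 := by positivity
  have hm1 : 0 ≤ (1+ν)/2 * ((a.re+g.re)^2+(a.im+g.im)^2+(b.re-h.re)^2+(b.im-h.im)^2) :=
    mul_nonneg c1.le ht1
  have hm2 : 0 ≤ (1-ν)/2 * ((g.re+b.im)^2+(g.im-b.re)^2+(a.re-h.im)^2+(a.im+h.re)^2) :=
    mul_nonneg c2.le ht2
  have s1 : (a.re+g.re)^2+(a.im+g.im)^2+(b.re-h.re)^2+(b.im-h.im)^2 = 0 :=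
    (mul_eq_zero.mp (by linarith : (1+ν)/2 * ((a.re+g.re)^2+(a.im+g.im)^2+(b.re-h.re)^2+(b.im-h.im)^2) = 0)).resolve_left (ne_of_gt c1)
  have s2 : (g.re+b.im)^2+(g.im-b.re)^2+(a.re-h.im)^2+(a.im+h.re)^2 = 0 :=
    (mul_eq_zero.mp (by linarith : (1-ν)/2 * ((g.re+b.im)^2+(g.im-b.re)^2+(a.re-h.im)^2+(a.im+h.re)^2) = 0)).resolve_left (ne_of_gt c2)
  have sq0 : ∀ x : ℝ, x^2 ≤ 0 → x = 0 := fun x hx =>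
    pow_eq_zero_iff two_ne_zero |>.mp (le_antisymm hx (sq_nonneg x))
  have e1 : a.re + g.re = 0 := sq0 _ (by nlinarith [sq_nonneg (a.im+g.im), sq_nonneg (b.re-h.re), sq_nonneg (b.im-h.im)])
  have e2 : a.im + g.im = 0 := sq0 _ (by nlinarith [sq_nonneg (a.re+g.re), sq_nonneg (b.re-h.re), sq_nonneg (b.im-h.im)])
  have e3 : b.re - h.re = 0 := sq0 _ (by nlinarith [sq_nonneg (a.re+g.re), sq_nonneg (a.im+g.im), sq_nonneg (b.im-h.im)])
  have e4 : b.im - h.im = 0 := sq0 _ (by nlinarith [sq_nonneg (a.re+g.re), sq_nonneg (a.im+g.im), sq_nonneg (b.re-h.re)])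
  have e5 : g.re + b.im = 0 := sq0 _ (by nlinarith [sq_nonneg (g.im-b.re), sq_nonneg (a.re-h.im), sq_nonneg (a.im+h.re)])
  have e6 : g.im - b.re = 0 := sq0 _ (by nlinarith [sq_nonneg (g.re+b.im), sq_nonneg (a.re-h.im), sq_nonneg (a.im+h.re)])
  refine ⟨?_, ?_, ?_⟩ <;> rw [Complex.ext_iff] <;> constructor <;> (try
    simp only [Complex.neg_re, Complex.neg_im, Complex.mul_re, Complex.mul_im,
      Complex.I_re, Complex.I_im]) <;> linarith

lemma clm_ext {L M : ℂ →L[ℝ] ℂ} (h1 : L 1 = M 1) (hI : L Complex.I = M Complex.I) : L = M := by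
  apply ContinuousLinearMap.ext
  intro w
  have hw : w = w.re • (1:ℂ) + w.im • Complex.I := by
    rw [Complex.real_smul, Complex.real_smul, mul_one, Complex.re_add_im]
  rw [hw, map_add, map_add, map_smul, map_smul, map_smul, map_smul, h1, hI]

lemma fderiv_eval {f : ℂ → ℂ} {z : ℂ} (hf : DifferentiableAt ℝ (fderiv ℝ f) z) (v u : ℂ) :
    fderiv ℝ (fun w => fderiv ℝ f w v) z u = fderiv ℝ (fderiv ℝ f) z u v := by
  rw [fderiv_clm_apply hf (differentiableAt_const v)]
  simp

theorem stmt1 (Ω : Set ℂ) (hΩne : Ω.Nonempty) (hΩo : IsOpen Ω) (hΩc : Convex ℝ Ω)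
    (ν : ℝ) (hν : ν ∈ Set.Ioo (-1 : ℝ) 1)
    (ηm ηp : ℂ → ℂ) (hm : ContDiffOn ℝ (⊤ : ℕ∞) ηm Ω) (hp : ContDiffOn ℝ (⊤ : ℕ∞) ηp Ω)
    (hzero : ∀ z ∈ Ω, ekin ν ηm ηp z = 0) :
    ∃ cp cm α : ℂ, ∀ z ∈ Ω, ηp z = cp + α * z ∧ ηm z = cm - α * (starRingEnd ℂ) z := by
  obtain ⟨hν1, hν2⟩ := hν
  obtain ⟨z₀, hz₀⟩ := hΩne
  -- pointwise first-order relations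
  have rel : ∀ z ∈ Ω, fderiv ℝ ηm z 1 = -(fderiv ℝ ηp z 1)
      ∧ fderiv ℝ ηm z Complex.I = fderiv ℝ ηp z Complex.I
      ∧ fderiv ℝ ηp z Complex.I = Complex.I * fderiv ℝ ηp z 1 := by
    intro z hz
    have h0 := hzero z hz
    unfold ekin px py at h0
    exact pointwise_alg hν1 hν2 _ _ _ _ h0
  -- smoothness facts
  have hpc : ∀ z ∈ Ω, ContDiffAt ℝ (⊤ : ℕ∞) ηp z := fun z hz => (hp z hz).contDiffAt (hΩo.mem_nhds hz)
  have hmc : ∀ z ∈ Ω, ContDiffAt ℝ (⊤ : ℕ∞) ηm z := fun z hz => (hm z hz).contDiffAt (hΩo.mem_nhds hz)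
  have hFp : ∀ z ∈ Ω, DifferentiableAt ℝ (fderiv ℝ ηp) z := fun z hz =>
    (((hpc z hz).fderiv_right (m := 1) (WithTop.coe_le_coe.mpr le_top)).differentiableAt one_ne_zero)
  have hFm : ∀ z ∈ Ω, DifferentiableAt ℝ (fderiv ℝ ηm) z := fun z hz =>
    (((hmc z hz).fderiv_right (m := 1) (WithTop.coe_le_coe.mpr le_top)).differentiableAt one_ne_zero)
  -- second-derivative relations
  have hA0 : ∀ z ∈ Ω, fderiv ℝ (fun w => fderiv ℝ ηp w 1) z = 0 := by
    intro z hz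
    have symp : ∀ u v, fderiv ℝ (fderiv ℝ ηp) z u v = fderiv ℝ (fderiv ℝ ηp) z v u :=
      (hpc z hz).isSymmSndFDerivAt (by rw [minSmoothness_of_isRCLikeNormedField]; exact WithTop.coe_le_coe.mpr le_top)
    have symm : ∀ u v, fderiv ℝ (fderiv ℝ ηm) z u v = fderiv ℝ (fderiv ℝ ηm) z v u :=
      (hmc z hz).isSymmSndFDerivAt (by rw [minSmoothness_of_isRCLikeNormedField]; exact WithTop.coe_le_coe.mpr le_top)
    have hA : DifferentiableAt ℝ (fun w => fderiv ℝ ηp w 1) z :=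
      (hFp z hz).clm_apply (differentiableAt_const 1)
    have e1 : ∀ u, fderiv ℝ (fderiv ℝ ηm) z u 1 = -(fderiv ℝ (fderiv ℝ ηp) z u 1) := by
      intro u
      have hev : (fun w => fderiv ℝ ηm w 1) =ᶠ[nhds z] (fun w => -(fderiv ℝ ηp w 1)) := by
        filter_upwards [hΩo.mem_nhds hz] with w hw using (rel w hw).1
      calc fderiv ℝ (fderiv ℝ ηm) z u 1
          = fderiv ℝ (fun w => fderiv ℝ ηm w 1) z u := (fderiv_eval (hFm z hz) 1 u).symm
        _ = fderiv ℝ (fun w => -(fderiv ℝ ηp w 1)) z u := by rw [hev.fderiv_eq]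
        _ = -(fderiv ℝ (fun w => fderiv ℝ ηp w 1) z u) := by rw [fderiv_fun_neg]; rfl
        _ = -(fderiv ℝ (fderiv ℝ ηp) z u 1) := by rw [fderiv_eval (hFp z hz) 1 u]
    have e2 : ∀ u, fderiv ℝ (fderiv ℝ ηm) z u Complex.I
        = fderiv ℝ (fderiv ℝ ηp) z u Complex.I := by
      intro u
      have hev : (fun w => fderiv ℝ ηm w Complex.I) =ᶠ[nhds z]
          (fun w => fderiv ℝ ηp w Complex.I) := by
        filter_upwards [hΩo.mem_nhds hz] with w hw using (rel w hw).2.1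
      calc fderiv ℝ (fderiv ℝ ηm) z u Complex.I
          = fderiv ℝ (fun w => fderiv ℝ ηm w Complex.I) z u :=
            (fderiv_eval (hFm z hz) Complex.I u).symm
        _ = fderiv ℝ (fun w => fderiv ℝ ηp w Complex.I) z u := by rw [hev.fderiv_eq]
        _ = fderiv ℝ (fderiv ℝ ηp) z u Complex.I := fderiv_eval (hFp z hz) Complex.I u
    have e3 : ∀ u, fderiv ℝ (fderiv ℝ ηp) z u Complex.I
        = Complex.I * fderiv ℝ (fderiv ℝ ηp) z u 1 := by
      intro u
      have hev : (fun w => fderiv ℝ ηp w Complex.I) =ᶠ[nhds z]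
          (fun w => Complex.I * fderiv ℝ ηp w 1) := by
        filter_upwards [hΩo.mem_nhds hz] with w hw using (rel w hw).2.2
      calc fderiv ℝ (fderiv ℝ ηp) z u Complex.I
          = fderiv ℝ (fun w => fderiv ℝ ηp w Complex.I) z u :=
            (fderiv_eval (hFp z hz) Complex.I u).symm
        _ = fderiv ℝ (fun w => Complex.I * fderiv ℝ ηp w 1) z u := by rw [hev.fderiv_eq]
        _ = Complex.I * fderiv ℝ (fun w => fderiv ℝ ηp w 1) z u := by
            rw [fderiv_const_mul hA Complex.I]; simp
        _ = Complex.I * fderiv ℝ (fderiv ℝ ηp) z u 1 := by rw [fderiv_eval (hFp z hz) 1 u]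
    have h11 : fderiv ℝ (fderiv ℝ ηp) z 1 1 = 0 := by
      have hm1 : fderiv ℝ (fderiv ℝ ηm) z 1 Complex.I = fderiv ℝ (fderiv ℝ ηm) z Complex.I 1 :=
        symm 1 Complex.I
      rw [e2 1, e3 1, e1 Complex.I, symp Complex.I 1, e3 1] at hm1
      have h2 : Complex.I * fderiv ℝ (fderiv ℝ ηp) z 1 1 = 0 := by
        linear_combination hm1 / 2
      rcases mul_eq_zero.mp h2 with h | h
      · exact absurd h Complex.I_ne_zero
      · exact h
    have hI1 : fderiv ℝ (fderiv ℝ ηp) z Complex.I 1 = 0 := by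
      rw [symp Complex.I 1, e3 1, h11, mul_zero]
    have : fderiv ℝ (fun w => fderiv ℝ ηp w 1) z = 0 := by
      apply clm_ext
      · rw [fderiv_eval (hFp z hz) 1 1, h11]; simp
      · rw [fderiv_eval (hFp z hz) 1 Complex.I, hI1]; simp
    exact this
  -- constancy of the derivative
  set α : ℂ := fderiv ℝ ηp z₀ 1 with hα
  have hAdiff : DifferentiableOn ℝ (fun w => fderiv ℝ ηp w 1) Ω := fun z hz =>
    ((hFp z hz).clm_apply (differentiableAt_const 1)).differentiableWithinAt
  have hAconst : ∀ z ∈ Ω, fderiv ℝ ηp z 1 = α := fun z hz =>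
    hΩc.is_const_of_fderivWithin_eq_zero hAdiff
      (fun x hx => by rw [fderivWithin_of_isOpen hΩo hx]; exact hA0 x hx) hz hz₀
  -- pinned derivatives
  have dp1 : ∀ z ∈ Ω, fderiv ℝ ηp z 1 = α := hAconst
  have dpI : ∀ z ∈ Ω, fderiv ℝ ηp z Complex.I = Complex.I * α := fun z hz => by
    rw [(rel z hz).2.2, dp1 z hz]
  have dm1 : ∀ z ∈ Ω, fderiv ℝ ηm z 1 = -α := fun z hz => by
    rw [(rel z hz).1, dp1 z hz]
  have dmI : ∀ z ∈ Ω, fderiv ℝ ηm z Complex.I = Complex.I * α := fun z hz => by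
    rw [(rel z hz).2.1, dpI z hz]
  -- affine conclusion for ηp
  have hmul : ∀ z : ℂ, DifferentiableAt ℝ (fun w : ℂ => α * w) z := fun z =>
    differentiableAt_id.const_mul α
  have hmd : ∀ x u : ℂ, fderiv ℝ (fun w : ℂ => α * w) x u = α * u := by
    intro x u
    have h1 : HasFDerivAt (fun w : ℂ => α * w) (α • ContinuousLinearMap.id ℝ ℂ) x :=
      (hasFDerivAt_id x).const_mul α
    rw [h1.fderiv]
    simp
  have hPdiff : DifferentiableOn ℝ (fun w => ηp w - α * w) Ω := fun z hz =>
    (((hpc z hz).differentiableAt (by simp)).sub (hmul z)).differentiableWithinAt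
  have hPconst : ∀ z ∈ Ω, ηp z - α * z = ηp z₀ - α * z₀ := by
    intro z hz
    apply hΩc.is_const_of_fderivWithin_eq_zero hPdiff _ hz hz₀
    intro x hx
    rw [fderivWithin_of_isOpen hΩo hx]
    rw [fderiv_fun_sub ((hpc x hx).differentiableAt (by simp)) (hmul x)]
    apply clm_ext <;>
      simp only [ContinuousLinearMap.sub_apply, ContinuousLinearMap.zero_apply]
    · rw [dp1 x hx, hmd]; ring
    · rw [dpI x hx, hmd]; ring
  -- conjugate-affine conclusion for ηm
  have hconj : ∀ z : ℂ, DifferentiableAt ℝ (fun w : ℂ => α * (starRingEnd ℂ) w) z := by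
    intro z
    have : (fun w : ℂ => α * (starRingEnd ℂ) w) = fun w => α * Complex.conjCLE w := by
      funext w; rw [Complex.conjCLE_apply]
    rw [this]
    exact Complex.conjCLE.differentiable.differentiableAt.const_mul α
  have hconjd : ∀ z : ℂ, fderiv ℝ (fun w : ℂ => α * (starRingEnd ℂ) w) z
      = α • (Complex.conjCLE : ℂ →L[ℝ] ℂ) := by
    intro z
    have h1 : (fun w : ℂ => α * (starRingEnd ℂ) w) = fun w => α * Complex.conjCLE w := by
      funext w; rw [Complex.conjCLE_apply]
    rw [h1, fderiv_const_mul Complex.conjCLE.differentiable.differentiableAt α,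
      Complex.conjCLE.fderiv]
  have hQdiff : DifferentiableOn ℝ (fun w => ηm w + α * (starRingEnd ℂ) w) Ω := fun z hz =>
    (((hmc z hz).differentiableAt (by simp)).add (hconj z)).differentiableWithinAt
  have hQconst : ∀ z ∈ Ω, ηm z + α * (starRingEnd ℂ) z = ηm z₀ + α * (starRingEnd ℂ) z₀ := by
    intro z hz
    apply hΩc.is_const_of_fderivWithin_eq_zero hQdiff _ hz hz₀
    intro x hx
    rw [fderivWithin_of_isOpen hΩo hx]
    rw [fderiv_fun_add ((hmc x hx).differentiableAt (by simp)) (hconj x), hconjd x]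
    apply clm_ext <;>
      simp only [ContinuousLinearMap.add_apply, ContinuousLinearMap.zero_apply,
        ContinuousLinearMap.smul_apply, ContinuousLinearMap.coe_coe,
        Complex.conjCLE_apply, smul_eq_mul]
    · rw [dm1 x hx]; simp
    · rw [dmI x hx]; simp [Complex.conj_I]; ring
  refine ⟨ηp z₀ - α * z₀, ηm z₀ + α * (starRingEnd ℂ) z₀, α, fun z hz => ⟨?_, ?_⟩⟩
  · have := hPconst z hz; linear_combination this
  · have := hQconst z hz; linear_combination this
end

section
/- For every ν ∈ (-1,1) and all complex numbers η₊, η₋, the p-wave potential energy density e_pot(η) = (1/2)(|η₊|²−1)² + (1/2)(|η₋|²−1)² + 2|η₊|²|η₋|² + ν·(η₊²)·(η₋²) satisfies e_pot(η) ≥ 1/2, with equality if and only if (|η₋|, |η₊|) = (1,0) or (|η₋|, |η₊|) = (0,1). -/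
/-- The p-wave potential energy density. -/
noncomputable def epot (ν : ℝ) (ηm ηp : ℂ) : ℝ :=
  (1 / 2) * (‖ηp‖ ^ 2 - 1) ^ 2 + (1 / 2) * (‖ηm‖ ^ 2 - 1) ^ 2
    + 2 * ‖ηp‖ ^ 2 * ‖ηm‖ ^ 2 + ν * cdot (ηp ^ 2) (ηm ^ 2)

lemma cdot_eq_re_mul_conj (a b : ℂ) : cdot a b = (a * (starRingEnd ℂ) b).re := by
  simp only [cdot, Complex.mul_re, Complex.conj_re, Complex.conj_im]
  ring

lemma abs_cdot_le (a b : ℂ) : |cdot a b| ≤ ‖a‖ * ‖b‖ := by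
  rw [cdot_eq_re_mul_conj, ← Complex.norm_conj b, ← norm_mul]
  exact Complex.abs_re_le_norm _

lemma epot_eq (ν : ℝ) (ηm ηp : ℂ) :
    epot ν ηm ηp = 1 / 2 + (‖ηp‖ ^ 2 + ‖ηm‖ ^ 2 - 1) ^ 2 / 2
      + (‖ηp‖ ^ 2 * ‖ηm‖ ^ 2 + ν * cdot (ηp ^ 2) (ηm ^ 2)) := by
  rw [epot]
  ring

section CouplingTerm

variable {ν c p : ℝ}

lemma one_sub_abs_mul_le_add_mul (hc : |c| ≤ p) : (1 - |ν|) * p ≤ p + ν * c := by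
  have : -(ν * c) ≤ |ν| * p := calc
    -(ν * c) ≤ |ν * c| := neg_le_abs _
    _ = |ν| * |c| := abs_mul ν c
    _ ≤ |ν| * p := mul_le_mul_of_nonneg_left hc (abs_nonneg ν)
  linarith

lemma add_mul_nonneg_of_abs_le (hν : |ν| ≤ 1) (hc : |c| ≤ p) : 0 ≤ p + ν * c :=
  (mul_nonneg (sub_nonneg.mpr hν) ((abs_nonneg c).trans hc)).trans
    (one_sub_abs_mul_le_add_mul hc)

lemma add_mul_eq_zero_iff_of_abs_le (hν : |ν| < 1) (hc : |c| ≤ p) : p + ν * c = 0 ↔ p = 0 := by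
  constructor
  · intro h
    have hle : (1 - |ν|) * p ≤ 0 := h ▸ one_sub_abs_mul_le_add_mul hc
    exact le_antisymm (nonpos_of_mul_nonpos_right hle (sub_pos.mpr hν)) ((abs_nonneg c).trans hc)
  · rintro rfl
    rw [abs_nonpos_iff.mp hc]
    ring

end CouplingTerm

lemma sq_add_sq_eq_one_and_sq_mul_sq_eq_zero_iff {a b : ℝ} (ha : 0 ≤ a) (hb : 0 ≤ b) :
    (a ^ 2 + b ^ 2 - 1 = 0 ∧ a ^ 2 * b ^ 2 = 0) ↔ (b = 1 ∧ a = 0) ∨ (b = 0 ∧ a = 1) := by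
  constructor
  · rintro ⟨hsum, hprod⟩
    rcases mul_eq_zero.mp hprod with h | h
    · have ha0 := pow_eq_zero_iff two_ne_zero |>.mp h
      subst ha0
      exact Or.inl ⟨(pow_eq_one_iff_of_nonneg hb two_ne_zero).mp (by linarith), rfl⟩
    · have hb0 := pow_eq_zero_iff two_ne_zero |>.mp h
      subst hb0
      exact Or.inr ⟨rfl, (pow_eq_one_iff_of_nonneg ha two_ne_zero).mp (by linarith)⟩
  · rintro (⟨rfl, rfl⟩ | ⟨rfl, rfl⟩) <;> norm_num

theorem stmt2 (ν : ℝ) (hν : ν ∈ Set.Ioo (-1 : ℝ) 1) (ηm ηp : ℂ) :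
    epot ν ηm ηp ≥ 1 / 2
    ∧ (epot ν ηm ηp = 1 / 2 ↔
        (‖ηm‖ = 1 ∧ ‖ηp‖ = 0) ∨
        (‖ηm‖ = 0 ∧ ‖ηp‖ = 1)) := by
  have hν' : |ν| < 1 := abs_lt.mpr hν
  have hc : |cdot (ηp ^ 2) (ηm ^ 2)| ≤ ‖ηp‖ ^ 2 * ‖ηm‖ ^ 2 := by
    rw [← norm_pow, ← norm_pow]
    exact abs_cdot_le _ _
  have hcoupling := add_mul_nonneg_of_abs_le hν'.le hc
  have hsq : 0 ≤ (‖ηp‖ ^ 2 + ‖ηm‖ ^ 2 - 1) ^ 2 / 2 := by positivity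
  rw [epot_eq]
  refine ⟨by linarith, ?_⟩
  rw [← sq_add_sq_eq_one_and_sq_mul_sq_eq_zero_iff (norm_nonneg ηp) (norm_nonneg ηm),
    ← add_mul_eq_zero_iff_of_abs_le hν' hc, add_assoc, add_eq_left,
    add_eq_zero_iff_of_nonneg hsq hcoupling]
  simp only [div_eq_zero_iff, pow_eq_zero_iff two_ne_zero, two_ne_zero, or_false]
end

section
/- Let n₋ ∈ ℤ and n₊ = n₋ + 2, and let η = (η₋, η₊) : ℝ² → ℂ² be smooth with compact support. Then for every complex number ω with |ω| = 1, the isotropic (ν = 0) p-wave kinetic energy is invariant under the equivariant action: ∫_{ℝ²} e_kin(ω·η) dx = ∫_{ℝ²} e_kin(η) dx, where (ω·η)₊(z) = ω^{n₊} η₊(ω⁻¹z), (ω·η)₋(z) = ω^{n₋} η₋(ω⁻¹z) (identifying points of ℝ² with complex numbers z), and e_kin(η) = |∇η₊|² + |∇η₋|² + (Π₋η₊)·(Π₊η₋) with Π± = ∂ₓ ± i∂ᵧ. -/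
/-- Π₊ = ∂ₓ + i∂ᵧ. -/
noncomputable def Pip (η : ℂ → ℂ) (z : ℂ) : ℂ := px η z + Complex.I * py η z

/-- Π₋ = ∂ₓ - i∂ᵧ. -/
noncomputable def Pim (η : ℂ → ℂ) (z : ℂ) : ℂ := px η z - Complex.I * py η z

/-- The isotropic (ν = 0) p-wave kinetic energy density
`e_kin(η) = |∇η₊|² + |∇η₋|² + (Π₋η₊)·(Π₊η₋)`. -/
noncomputable def ekin0 (ηm ηp : ℂ → ℂ) (z : ℂ) : ℝ :=
  ‖px ηp z‖ ^ 2 + ‖py ηp z‖ ^ 2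
    + ‖px ηm z‖ ^ 2 + ‖py ηm z‖ ^ 2
    + cdot (Pim ηp z) (Pip ηm z)

open Complex in
lemma fderiv_rot (η : ℂ → ℂ) (h : ContDiff ℝ (⊤ : ℕ∞) η) (c d z v : ℂ) :
    fderiv ℝ (fun w => d * η (c * w)) z v = d * fderiv ℝ η (c * z) (c * v) := by
  have h1 : HasFDerivAt (fun w : ℂ => c * w) (ContinuousLinearMap.mul ℝ ℂ c) z := by
    have := (ContinuousLinearMap.mul ℝ ℂ c).hasFDerivAt (x := z)
    convert this using 1
    funext w; simp
  have h2 := (h.differentiable (by simp) (c * z)).hasFDerivAt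
  have h3 := (h2.comp z h1).const_mul d
  have h4 : fderiv ℝ (fun w => d * η (c * w)) z
      = d • (fderiv ℝ η (c * z)).comp ((ContinuousLinearMap.mul ℝ ℂ) c) := h3.fderiv
  rw [h4]
  simp [ContinuousLinearMap.mul_apply']

open Complex in
lemma clm_apply_decomp (T : ℂ →L[ℝ] ℂ) (c : ℂ) :
    T c = c.re • T 1 + c.im • T Complex.I := by
  have h : T c = T (c.re • (1 : ℂ)) + T (c.im • Complex.I) := by
    rw [← map_add]
    congr 1
    simp [Complex.real_smul, Complex.re_add_im]
  rw [h, map_smul, map_smul]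

open Complex in
lemma cdot_as_re (x y : ℂ) : cdot x y = (x * (starRingEnd ℂ) y).re := by
  simp [cdot, Complex.mul_re]

open Complex in
lemma cdot_mul (p q A B : ℂ) (h : p * (starRingEnd ℂ) q = 1) :
    cdot (p * A) (q * B) = cdot A B := by
  rw [cdot_as_re, cdot_as_re]
  have h2 : p * A * (starRingEnd ℂ) (q * B) = A * (starRingEnd ℂ) B := by
    rw [map_mul]
    linear_combination (A * (starRingEnd ℂ) B) * h
  rw [h2]

lemma abs_sum_rot (a b : ℝ) (h : a ^ 2 + b ^ 2 = 1) (u v : ℂ) :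
    ‖a • u + b • v‖ ^ 2 + ‖(-b) • u + a • v‖ ^ 2
      = ‖u‖ ^ 2 + ‖v‖ ^ 2 := by
  simp only [Complex.sq_norm, Complex.normSq_apply, Complex.add_re, Complex.add_im,
    Complex.real_smul, Complex.mul_re, Complex.mul_im, Complex.ofReal_re, Complex.ofReal_im]
  ring_nf
  linear_combination (u.re ^ 2 + u.im ^ 2 + v.re ^ 2 + v.im ^ 2) * h

open Complex in
lemma ekin_pt (ηm ηp : ℂ → ℂ) (hm : ContDiff ℝ (⊤ : ℕ∞) ηm) (hp : ContDiff ℝ (⊤ : ℕ∞) ηp)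
    (c dm dp : ℂ) (hc : ‖c‖ = 1) (hdm : ‖dm‖ = 1)
    (hdp : ‖dp‖ = 1) (hmul : dp * (starRingEnd ℂ) dm * c ^ 2 = 1) (z : ℂ) :
    ekin0 (fun w => dm * ηm (c * w)) (fun w => dp * ηp (c * w)) z
      = ekin0 ηm ηp (c * z) := by
  set a := c.re with ha
  set b := c.im with hb
  have hab : a ^ 2 + b ^ 2 = 1 := by
    have := Complex.sq_norm c
    rw [hc] at this
    simpa [Complex.normSq_apply, sq] using this.symm
  have hcI_re : (c * Complex.I).re = -b := by simp [Complex.mul_re, hb]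
  have hcI_im : (c * Complex.I).im = a := by simp [Complex.mul_im, ha]
  -- derivatives of the rotated functions
  have hpxp : px (fun w => dp * ηp (c * w)) z = dp * (a • px ηp (c * z) + b • py ηp (c * z)) := by
    rw [px, fderiv_rot ηp hp, mul_one, clm_apply_decomp]
    rfl
  have hpyp : py (fun w => dp * ηp (c * w)) z
      = dp * ((-b) • px ηp (c * z) + a • py ηp (c * z)) := by
    rw [py, fderiv_rot ηp hp, clm_apply_decomp, hcI_re, hcI_im]
    rfl
  have hpxm : px (fun w => dm * ηm (c * w)) z = dm * (a • px ηm (c * z) + b • py ηm (c * z)) := by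
    rw [px, fderiv_rot ηm hm, mul_one, clm_apply_decomp]
    rfl
  have hpym : py (fun w => dm * ηm (c * w)) z
      = dm * ((-b) • px ηm (c * z) + a • py ηm (c * z)) := by
    rw [py, fderiv_rot ηm hm, clm_apply_decomp, hcI_re, hcI_im]
    rfl
  have hcab : (a : ℂ) + (b : ℂ) * Complex.I = c := Complex.re_add_im c
  -- the Π operators transform nicely
  have hPim : Pim (fun w => dp * ηp (c * w)) z = (dp * c) * Pim ηp (c * z) := by
    rw [Pim, hpxp, hpyp, Pim]
    simp only [Complex.real_smul]
    push_cast
    linear_combination (dp * (px ηp (c * z) - Complex.I * py ηp (c * z))) * hcab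
      + (dp * (b : ℂ) * py ηp (c * z)) * Complex.I_sq
  have hPip : Pip (fun w => dm * ηm (c * w)) z
      = (dm * (starRingEnd ℂ) c) * Pip ηm (c * z) := by
    rw [Pip, hpxm, hpym, Pip]
    have hconj : (starRingEnd ℂ) c = (a : ℂ) - (b : ℂ) * Complex.I := by
      rw [← hcab]; simp [map_add, map_mul, Complex.conj_I]; ring
    rw [hconj]
    simp only [Complex.real_smul]
    push_cast
    linear_combination (dm * (b : ℂ) * py ηm (c * z)) * Complex.I_sq
  -- abs of unit multiples
  have habs : ∀ (d x : ℂ), ‖d‖ = 1 → ‖d * x‖ = ‖x‖ := by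
    intro d x hd
    rw [norm_mul, hd, one_mul]
  rw [ekin0, ekin0, hpxp, hpyp, hpxm, hpym, hPim, hPip]
  rw [habs _ _ hdp, habs _ _ hdp, habs _ _ hdm, habs _ _ hdm]
  rw [cdot_mul _ _ _ _ (by
      rw [map_mul, Complex.conj_conj]
      linear_combination hmul)]
  have e1 := abs_sum_rot a b hab (px ηp (c * z)) (py ηp (c * z))
  have e2 := abs_sum_rot a b hab (px ηm (c * z)) (py ηm (c * z))
  linarith

theorem stmt3 (nm : ℤ) (ηm ηp : ℂ → ℂ)
    (hm : ContDiff ℝ (⊤ : ℕ∞) ηm) (hp : ContDiff ℝ (⊤ : ℕ∞) ηp)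
    (hcm : HasCompactSupport ηm) (hcp : HasCompactSupport ηp)
    (ω : ℂ) (hω : ‖ω‖ = 1) :
    ∫ z : ℂ, ekin0 (fun w => ω ^ nm * ηm (ω⁻¹ * w))
        (fun w => ω ^ (nm + 2) * ηp (ω⁻¹ * w)) z
      = ∫ z : ℂ, ekin0 ηm ηp z := by
  have hω0 : ω ≠ 0 := by
    intro h; rw [h] at hω; simp at hω
  have hconj : (starRingEnd ℂ) ω = ω⁻¹ := by
    rw [Complex.inv_def]
    have : Complex.normSq ω = 1 := by
      rw [← Complex.sq_norm, hω]; norm_num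
    rw [this]
    simp
  have habsinv : ‖ω⁻¹‖ = 1 := by
    rw [norm_inv, hω]; norm_num
  have habspow : ∀ n : ℤ, ‖ω ^ n‖ = 1 := by
    intro n
    rw [norm_zpow, hω, one_zpow]
  have hmul : ω ^ (nm + 2) * (starRingEnd ℂ) (ω ^ nm) * (ω⁻¹) ^ 2 = 1 := by
    rw [map_zpow₀, hconj, inv_zpow', inv_pow, ← zpow_natCast ω 2, ← zpow_neg,
      ← zpow_add₀ hω0, ← zpow_add₀ hω0]
    norm_num
  have hpt : ∀ z : ℂ, ekin0 (fun w => ω ^ nm * ηm (ω⁻¹ * w))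
      (fun w => ω ^ (nm + 2) * ηp (ω⁻¹ * w)) z = ekin0 ηm ηp (ω⁻¹ * z) :=
    ekin_pt ηm ηp hm hp ω⁻¹ (ω ^ nm) (ω ^ (nm + 2)) habsinv (habspow nm)
      (habspow (nm + 2)) hmul
  simp only [hpt]
  -- change of variables by the rotation z ↦ ω⁻¹ * z
  have hmem : ω⁻¹ ∈ Metric.sphere (0 : ℂ) 1 := by
    rw [mem_sphere_zero_iff_norm]
    simpa using habsinv
  set e : ℂ ≃ₗᵢ[ℝ] ℂ := rotation ⟨ω⁻¹, hmem⟩ with he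
  have hmp : MeasureTheory.MeasurePreserving e := e.measurePreserving
  have := hmp.integral_comp e.toHomeomorph.measurableEmbedding (fun z => ekin0 ηm ηp z)
  rw [← this]
  rfl
end

section
/- Let φ = (φ₋, φ₊) : (0,∞) → ℝ² be locally absolutely continuous with ‖φ‖²_ℋ < ∞. Then each component φ± extends to a continuous function on [0,∞) with φ±(0) = 0 and lim_{r→∞} φ±(r) = 0, and the supremum bound sup_{r>0} ( φ₋(r)² + φ₊(r)² ) ≤ ‖φ‖²_ℋ holds. -/
open MeasureTheory

/-- `φ` is locally absolutely continuous on `(0,∞)`: it is the indefinite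
integral of its derivative on compact subintervals of `(0,∞)`. -/
def LocAC (φ : ℝ → ℝ) : Prop :=
  ∀ a b : ℝ, 0 < a → a ≤ b →
    IntervalIntegrable (deriv φ) MeasureTheory.volume a b ∧
    φ b - φ a = ∫ t in a..b, deriv φ t

/-- The squared ℋ-norm `‖φ‖²_ℋ = ∫₀^∞ (φ₋'² + φ₊'² + (φ₋² + φ₊²)/r²) r dr`. -/
noncomputable def Hnorm2 (φm φp : ℝ → ℝ) : ℝ :=
  ∫ r in Set.Ioi (0 : ℝ),
    (deriv φm r ^ 2 + deriv φp r ^ 2 + (φm r ^ 2 + φp r ^ 2) / r ^ 2) * r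

/-!
Write `F = φ₋² + φ₊²` and `G` for the integrand of `‖φ‖²_ℋ`. Absolute continuity gives
`F b - F a = ∫ₐᵇ 2 (φ₋ φ₋' + φ₊ φ₊')`, and AM–GM bounds this integrand by `G`, so
`|F b - F a| ≤ ∫ₐᵇ G`. Since `F r / r ≤ G r` with `G` integrable, while `1 / r` is integrable
neither near `0` nor near `∞`, `F` is arbitrarily small somewhere in every `(0, r]` and every `(r, ∞)`;
hence `F r ≤ ∫₀ʳ G` and `F r ≤ ∫ᵣ^∞ G`, and both bounds tend to `0`.
-/

open Set Filter Topology

theorem AbsolutelyContinuousOnInterval.congr {X : Type*} [PseudoMetricSpace X] {f g : ℝ → X}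
    {a b : ℝ} (hf : AbsolutelyContinuousOnInterval f a b) (hfg : EqOn f g (uIcc a b)) :
    AbsolutelyContinuousOnInterval g a b := by
  rw [absolutelyContinuousOnInterval_iff] at hf ⊢
  intro ε hε
  obtain ⟨δ, hδ, hfδ⟩ := hf ε hε
  refine ⟨δ, hδ, fun E hE hlen => ?_⟩
  convert hfδ E hE hlen using 2 with i hi
  rw [hfg (hE.1 i hi).1, hfg (hE.1 i hi).2]

namespace LocAC

variable {φ : ℝ → ℝ}

theorem absolutelyContinuousOnInterval (h : LocAC φ) {a b : ℝ} (ha : 0 < a) (hab : a ≤ b) :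
    AbsolutelyContinuousOnInterval φ a b := by
  have hprim := (h a b ha hab).1.absolutelyContinuousOnInterval_intervalIntegral left_mem_uIcc
  refine ((LipschitzWith.const (φ a)).lipschitzOnWith.absolutelyContinuousOnInterval.fun_add
    hprim).congr fun x hx => ?_
  rw [uIcc_of_le hab] at hx
  linarith [(h a x ha hx.1).2]

theorem continuousOn (h : LocAC φ) : ContinuousOn φ (Ioi 0) := by
  intro r (hr : 0 < r)
  have hle : r / 2 ≤ r + 1 := by linarith
  have hac := h.absolutelyContinuousOnInterval (half_pos hr) hle
  refine (hac.continuousOn.continuousAt ?_).continuousWithinAt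
  rw [uIcc_of_le hle]
  exact Icc_mem_nhds (by linarith) (by linarith)

theorem sq_sub_sq (h : LocAC φ) {a b : ℝ} (ha : 0 < a) (hab : a ≤ b) :
    φ b ^ 2 - φ a ^ 2 = ∫ t in a..b, 2 * φ t * deriv φ t := by
  have hac := h.absolutelyContinuousOnInterval ha hab
  rw [sq, sq, ← hac.integral_deriv_mul_eq_sub hac]
  congr 1 with t
  ring

theorem intervalIntegrable_mul_deriv (h : LocAC φ) {a b : ℝ} (ha : 0 < a) (hab : a ≤ b) :
    IntervalIntegrable (fun t => 2 * φ t * deriv φ t) volume a b := by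
  have hac := h.absolutelyContinuousOnInterval ha hab
  simpa only [mul_assoc] using
    (hac.intervalIntegrable_deriv.continuousOn_mul hac.continuousOn).const_mul 2

end LocAC

theorem two_mul_abs_mul_le {x u r : ℝ} (hr : 0 < r) : 2 * |x * u| ≤ u ^ 2 * r + x ^ 2 / r := by
  rw [abs_mul, ← sub_nonneg]
  have key : u ^ 2 * r + x ^ 2 / r - 2 * (|x| * |u|) = (|u| * r - |x|) ^ 2 / r := by
    field_simp
    rw [← sq_abs u, ← sq_abs x]
    ring
  rw [key]
  positivity

theorem abs_two_mul_add_two_mul_le {x y u v r : ℝ} (hr : 0 < r) :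
    |2 * x * u + 2 * y * v| ≤ (u ^ 2 + v ^ 2 + (x ^ 2 + y ^ 2) / r ^ 2) * r :=
  calc |2 * x * u + 2 * y * v| ≤ 2 * |x * u| + 2 * |y * v| := by
        simpa only [mul_assoc, abs_mul, abs_two] using abs_add_le (2 * (x * u)) (2 * (y * v))
    _ ≤ (u ^ 2 * r + x ^ 2 / r) + (v ^ 2 * r + y ^ 2 / r) :=
        add_le_add (two_mul_abs_mul_le hr) (two_mul_abs_mul_le hr)
    _ = (u ^ 2 + v ^ 2 + (x ^ 2 + y ^ 2) / r ^ 2) * r := by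
        field_simp
        ring

theorem sq_add_sq_div_le {x y u v r : ℝ} (hr : 0 < r) :
    (x ^ 2 + y ^ 2) / r ≤ (u ^ 2 + v ^ 2 + (x ^ 2 + y ^ 2) / r ^ 2) * r :=
  calc (x ^ 2 + y ^ 2) / r = (x ^ 2 + y ^ 2) / r ^ 2 * r := by field_simp
    _ ≤ (u ^ 2 + v ^ 2 + (x ^ 2 + y ^ 2) / r ^ 2) * r := by gcongr; nlinarith [sq_nonneg u, sq_nonneg v]

theorem abs_sq_add_sq_sub_le_setIntegral {φm φp : ℝ → ℝ} (hm : LocAC φm) (hp : LocAC φp)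
    {a b : ℝ} (ha : 0 < a) (hab : a ≤ b)
    (hG : IntegrableOn
      (fun r => (deriv φm r ^ 2 + deriv φp r ^ 2 + (φm r ^ 2 + φp r ^ 2) / r ^ 2) * r)
      (Ioc a b)) :
    |(φm b ^ 2 + φp b ^ 2) - (φm a ^ 2 + φp a ^ 2)| ≤
      ∫ r in Ioc a b, (deriv φm r ^ 2 + deriv φp r ^ 2 + (φm r ^ 2 + φp r ^ 2) / r ^ 2) * r := by
  have hsum : (φm b ^ 2 + φp b ^ 2) - (φm a ^ 2 + φp a ^ 2) =
      ∫ t in a..b, (2 * φm t * deriv φm t + 2 * φp t * deriv φp t) := by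
    rw [intervalIntegral.integral_add (hm.intervalIntegrable_mul_deriv ha hab)
      (hp.intervalIntegrable_mul_deriv ha hab), ← hm.sq_sub_sq ha hab, ← hp.sq_sub_sq ha hab]
    ring
  rw [hsum, ← Real.norm_eq_abs]
  refine (intervalIntegral.norm_integral_le_of_norm_le hab (ae_of_all _ fun t ht => ?_)
    ((intervalIntegrable_iff_integrableOn_Ioc_of_le hab).2 hG)).trans_eq
    (intervalIntegral.integral_of_le hab)
  exact abs_two_mul_add_two_mul_le (ha.trans ht.1)

section Decay

variable {F G : ℝ → ℝ}

theorem exists_lt_of_div_le_integrableOn {s : Set ℝ} (hs : MeasurableSet s) (hs0 : s ⊆ Ioi 0)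
    (hinv : ¬ IntegrableOn (fun r => r⁻¹) s) (hG : IntegrableOn G s)
    (hFG : ∀ r ∈ s, F r / r ≤ G r) {δ : ℝ} (hδ : 0 < δ) : ∃ r ∈ s, F r < δ := by
  by_contra! hF
  refine hinv (Integrable.mono' (hG.const_mul δ⁻¹) measurable_inv.aestronglyMeasurable
    ((ae_restrict_iff' hs).2 (ae_of_all _ fun r hr => ?_)))
  have hr0 : 0 < r := hs0 hr
  rw [Real.norm_of_nonneg (inv_nonneg.2 hr0.le)]
  calc r⁻¹ = δ⁻¹ * (δ / r) := by field_simp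
    _ ≤ δ⁻¹ * G r := by
      gcongr
      exact (div_le_div_of_nonneg_right (hF r hr) hr0.le).trans (hFG r hr)

theorem not_integrableOn_Ioc_zero_inv {r : ℝ} (hr : 0 < r) :
    ¬ IntegrableOn (fun x => x⁻¹) (Ioc 0 r) := fun h => by
  simpa [intervalIntegrable_inv_iff, hr.ne] using
    (intervalIntegrable_iff_integrableOn_Ioc_of_le hr.le).2 h

theorem le_setIntegral_Ioc_zero_of_abs_sub_le (hG : IntegrableOn G (Ioi 0))
    (hG0 : ∀ r ∈ Ioi 0, 0 ≤ G r) (hFG : ∀ r ∈ Ioi 0, F r / r ≤ G r)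
    (hosc : ∀ a b, 0 < a → a ≤ b → |F b - F a| ≤ ∫ t in Ioc a b, G t) {r : ℝ} (hr : 0 < r) :
    F r ≤ ∫ t in Ioc 0 r, G t := by
  refine le_of_forall_pos_le_add fun δ hδ => ?_
  obtain ⟨a, ha, hFa⟩ := exists_lt_of_div_le_integrableOn measurableSet_Ioc
    (fun _ h => h.1) (not_integrableOn_Ioc_zero_inv hr) (hG.mono_set Ioc_subset_Ioi_self)
    (fun t ht => hFG t ht.1) hδ
  have hmono : ∫ t in Ioc a r, G t ≤ ∫ t in Ioc 0 r, G t :=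
    setIntegral_mono_set (hG.mono_set Ioc_subset_Ioi_self)
      ((ae_restrict_iff' measurableSet_Ioc).2 (ae_of_all _ fun t ht => hG0 t ht.1))
      (Ioc_subset_Ioc_left ha.1.le).eventuallyLE
  linarith [le_abs_self (F r - F a), hosc a r ha.1 ha.2]

theorem le_setIntegral_Ioi_of_abs_sub_le (hG : IntegrableOn G (Ioi 0))
    (hG0 : ∀ r ∈ Ioi 0, 0 ≤ G r) (hFG : ∀ r ∈ Ioi 0, F r / r ≤ G r)
    (hosc : ∀ a b, 0 < a → a ≤ b → |F b - F a| ≤ ∫ t in Ioc a b, G t) {r : ℝ} (hr : 0 < r) :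
    F r ≤ ∫ t in Ioi r, G t := by
  have hGr : IntegrableOn G (Ioi r) := hG.mono_set (Ioi_subset_Ioi hr.le)
  refine le_of_forall_pos_le_add fun δ hδ => ?_
  obtain ⟨a, ha, hFa⟩ := exists_lt_of_div_le_integrableOn measurableSet_Ioi
    (Ioi_subset_Ioi hr.le) not_integrableOn_Ioi_inv hGr
    (fun t ht => hFG t (hr.trans ht)) hδ
  have hmono : ∫ t in Ioc r a, G t ≤ ∫ t in Ioi r, G t :=
    setIntegral_mono_set hGr
      ((ae_restrict_iff' measurableSet_Ioi).2 (ae_of_all _ fun t ht => hG0 t (hr.trans ht)))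
      Ioc_subset_Ioi_self.eventuallyLE
  linarith [neg_abs_le (F a - F r), hosc r a hr (le_of_lt ha)]

theorem tendsto_setIntegral_Ioc_nhdsGT {a b : ℝ} (hab : a < b) (hG : IntegrableOn G (Ioc a b)) :
    Tendsto (fun r => ∫ t in Ioc a r, G t) (𝓝[>] a) (𝓝 0) := by
  have hcont := intervalIntegral.continuousOn_primitive
    ((integrableOn_Icc_iff_integrableOn_Ioc).2 hG) a (left_mem_Icc.2 hab.le)
  simpa using (hcont.mono_of_mem_nhdsWithin (mem_of_superset (Ioc_mem_nhdsGT hab)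
    Ioc_subset_Icc_self)).tendsto
  
end Decay

theorem tendsto_zero_of_sq_le {α : Type*} {f F : α → ℝ} {l : Filter α}
    (hF : Tendsto F l (𝓝 0)) (hfF : ∀ x, f x ^ 2 ≤ F x) : Tendsto f l (𝓝 0) :=
  squeeze_zero_norm (fun x => Real.abs_le_sqrt (hfF x)) (by simpa using hF.sqrt)

theorem stmt13 (φm φp : ℝ → ℝ) (hm : LocAC φm) (hp : LocAC φp)
    (hfin : IntegrableOn
      (fun r => (deriv φm r ^ 2 + deriv φp r ^ 2 + (φm r ^ 2 + φp r ^ 2) / r ^ 2) * r)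
      (Set.Ioi 0)) :
    ContinuousOn φm (Set.Ioi 0) ∧ ContinuousOn φp (Set.Ioi 0) ∧
    Filter.Tendsto φm (nhdsWithin 0 (Set.Ioi 0)) (nhds 0) ∧
    Filter.Tendsto φp (nhdsWithin 0 (Set.Ioi 0)) (nhds 0) ∧
    Filter.Tendsto φm Filter.atTop (nhds 0) ∧
    Filter.Tendsto φp Filter.atTop (nhds 0) ∧
    ∀ r > (0 : ℝ), φm r ^ 2 + φp r ^ 2 ≤ Hnorm2 φm φp := by
  set F : ℝ → ℝ := fun r => φm r ^ 2 + φp r ^ 2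
  set G : ℝ → ℝ := fun r =>
    (deriv φm r ^ 2 + deriv φp r ^ 2 + (φm r ^ 2 + φp r ^ 2) / r ^ 2) * r
  have hFG : ∀ r ∈ Ioi 0, F r / r ≤ G r := fun r hr => sq_add_sq_div_le hr
  have hG0 : ∀ r ∈ Ioi 0, 0 ≤ G r := fun r (hr : 0 < r) =>
    (div_nonneg (by positivity) hr.le).trans (hFG r hr)
  have hosc : ∀ a b, 0 < a → a ≤ b → |F b - F a| ≤ ∫ t in Ioc a b, G t := fun a b ha hab =>
    abs_sq_add_sq_sub_le_setIntegral hm hp ha hab (hfin.mono_set fun t ht => ha.trans ht.1)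
  have hF0 : ∀ r, 0 ≤ F r := fun r => by positivity
  have hzero : Tendsto F (𝓝[>] 0) (𝓝 0) :=
    squeeze_zero' (Eventually.of_forall hF0) (eventually_nhdsWithin_of_forall fun r hr =>
      le_setIntegral_Ioc_zero_of_abs_sub_le hfin hG0 hFG hosc hr)
      (tendsto_setIntegral_Ioc_nhdsGT zero_lt_one (hfin.mono_set Ioc_subset_Ioi_self))
  have htop : Tendsto F atTop (𝓝 0) :=
    squeeze_zero' (Eventually.of_forall hF0) ((eventually_gt_atTop 0).mono fun r hr =>
      le_setIntegral_Ioi_of_abs_sub_le hfin hG0 hFG hosc hr) (tendsto_integral_Ioi_zero tendsto_id)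
  have hm_le : ∀ r, φm r ^ 2 ≤ F r := fun r => le_add_of_nonneg_right (sq_nonneg _)
  have hp_le : ∀ r, φp r ^ 2 ≤ F r := fun r => le_add_of_nonneg_left (sq_nonneg _)
  refine ⟨hm.continuousOn, hp.continuousOn, tendsto_zero_of_sq_le hzero hm_le,
    tendsto_zero_of_sq_le hzero hp_le, tendsto_zero_of_sq_le htop hm_le,
    tendsto_zero_of_sq_le htop hp_le, fun r hr => ?_⟩
  exact (le_setIntegral_Ioc_zero_of_abs_sub_le hfin hG0 hFG hosc hr).trans
    (setIntegral_mono_set hfin ((ae_restrict_iff' measurableSet_Ioi).2 (ae_of_all _ hG0))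
      Ioc_subset_Ioi_self.eventuallyLE)
end

section
/- Let R > 0 and δ > 1/(2R²). Let 𝔸, 𝔹, ℂ, 𝔻 : [R,∞) → ℝ be bounded functions with 𝔸 > 0, 𝔻 > 0, 𝔹 ≤ 0, ℂ ≤ 0, such that 𝔸(r)x² + (𝔹(r)+ℂ(r))xy + 𝔻(r)y² ≥ δ(x² + y²) for all r ∈ [R,∞) and all (x,y) ∈ ℝ². Let u, v : [R,∞) → ℝ be bounded C² functions with bounded first derivatives satisfying −Δ_r u + u/r² + 𝔸u + 𝔹v ≤ 0 and −Δ_r v + v/r² + ℂu + 𝔻v ≤ 0 on (R,∞), with u(R) ≤ 0, v(R) ≤ 0, and u(r), v(r) → 0 as r → ∞. Then u ≤ 0 and v ≤ 0 on [R,∞). -/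
/-- The radial Laplacian `Δ_r u(r) = u''(r) + u'(r)/r`. -/
noncomputable def radLap (f : ℝ → ℝ) (r : ℝ) : ℝ := deriv (deriv f) r + deriv f r / r

/-!
Maximum principle for the positive-part energy `E = (u⁺)² + (v⁺)²`. If `E` is positive somewhere,
it attains a positive maximum on `[R, ∞)` (it vanishes at `R` and at infinity), at some `r₀ > R`.
With `α = u⁺(r₀)` and `β = v⁺(r₀)`, the combination `α u + β v` also has a local maximum at `r₀`,
so `α Δ_r u + β Δ_r v ≤ 0` there. On the other hand, pairing the two differential inequalities
with `(α, β)` and using `B, C ≤ 0` to replace `(u, v)` by `(α, β)` in the coupling terms gives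
`α Δ_r u + β Δ_r v ≥ δ (α² + β²) > 0`.
-/

open Set Filter Topology

/-- If `f'' x > 0`, the second derivative test makes `x` also a local minimum, so `f` is locally
constant and `f'' x = 0`. -/
theorem IsLocalMax.deriv_deriv_nonpos {f : ℝ → ℝ} {x : ℝ} (h : IsLocalMax f x)
    (hc : ContinuousAt f x) : deriv (deriv f) x ≤ 0 := by
  by_contra! hpos
  have hconst : f =ᶠ[𝓝 x] fun _ => f x :=
    ((isLocalMin_of_deriv_deriv_pos hpos h.deriv_eq_zero hc).and h).mono
      fun _ hy => le_antisymm hy.2 hy.1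
  rw [hconst.deriv.deriv_eq] at hpos
  simp at hpos

theorem radLap_nonpos_of_isLocalMax {f : ℝ → ℝ} {x : ℝ} (h : IsLocalMax f x)
    (hc : ContinuousAt f x) : radLap f x ≤ 0 := by
  rw [radLap, h.deriv_eq_zero, zero_div, add_zero]
  exact h.deriv_deriv_nonpos hc

theorem radLap_linear_combination {f g : ℝ → ℝ} {x : ℝ} (a b : ℝ)
    (hf : ContDiffAt ℝ 2 f x) (hg : ContDiffAt ℝ 2 g x) :
    radLap (fun r => a * f r + b * g r) x = a * radLap f x + b * radLap g x := by
  have hdiff : ∀ {φ : ℝ → ℝ}, ContDiffAt ℝ 2 φ x → ∀ᶠ y in 𝓝 x, DifferentiableAt ℝ φ y :=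
    fun hφ => (hφ.eventually (by simp)).mono fun _ hy => hy.differentiableAt (by norm_num)
  have hderiv : deriv (fun r => a * f r + b * g r) =ᶠ[𝓝 x]
      fun r => a * deriv f r + b * deriv g r := by
    filter_upwards [hdiff hf, hdiff hg] with y hfy hgy
    exact ((hfy.hasDerivAt.const_mul a).add (hgy.hasDerivAt.const_mul b)).deriv
  have hf' := (hf.derivWithin (m := 1) (by norm_num)).differentiableAt one_ne_zero
  have hg' := (hg.derivWithin (m := 1) (by norm_num)).differentiableAt one_ne_zero
  have hderiv2 : deriv (fun r => a * deriv f r + b * deriv g r) x =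
      a * deriv (deriv f) x + b * deriv (deriv g) x :=
    ((hf'.hasDerivAt.const_mul a).add (hg'.hasDerivAt.const_mul b)).deriv
  rw [radLap, hderiv.deriv_eq, hderiv.eq_of_nhds, hderiv2, radLap, radLap]
  ring

theorem max_zero_mul_self (x : ℝ) : max x 0 * x = max x 0 ^ 2 := by
  rcases le_total x 0 with h | h <;> simp [h, sq]

theorem quadForm_max_zero_le {A B C D x y : ℝ} (hB : B ≤ 0) (hC : C ≤ 0) :
    A * max x 0 ^ 2 + (B + C) * max x 0 * max y 0 + D * max y 0 ^ 2 ≤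
      max x 0 * (A * x + B * y) + max y 0 * (C * x + D * y) := by
  have hBy : 0 ≤ max x 0 * (B * (y - max y 0)) :=
    mul_nonneg (le_max_right _ _) (mul_nonneg_of_nonpos_of_nonpos hB (by simp))
  have hCx : 0 ≤ max y 0 * (C * (x - max x 0)) :=
    mul_nonneg (le_max_right _ _) (mul_nonneg_of_nonpos_of_nonpos hC (by simp))
  linear_combination (-A) * max_zero_mul_self x - D * max_zero_mul_self y + hBy + hCx

theorem exists_isMaxOn_Ici_of_tendsto {f : ℝ → ℝ} {R r₁ l : ℝ}
    (hf : ContinuousOn f (Ici R)) (hlim : Tendsto f atTop (𝓝 l)) (hr₁ : R ≤ r₁)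
    (hl : l < f r₁) : ∃ r₀ ∈ Ici R, IsMaxOn f (Ici R) r₀ := by
  refine hf.exists_isMaxOn' isClosed_Ici hr₁ ?_
  rw [cocompact_eq_atBot_atTop, inf_sup_right, eventually_sup, eventually_inf_principal,
    eventually_inf_principal]
  exact ⟨(eventually_lt_atBot R).mono fun _ hx hR => absurd hR (not_le.2 hx),
    (hlim.eventually (eventually_lt_nhds hl)).mono fun _ hx _ => hx.le⟩

noncomputable def posEnergy (u v : ℝ → ℝ) (r : ℝ) : ℝ := max (u r) 0 ^ 2 + max (v r) 0 ^ 2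

section posEnergy

variable {u v : ℝ → ℝ}

theorem posEnergy_nonneg (u v : ℝ → ℝ) (r : ℝ) : 0 ≤ posEnergy u v r := by
  unfold posEnergy; positivity

theorem posEnergy_eq_zero_iff {r : ℝ} : posEnergy u v r = 0 ↔ u r ≤ 0 ∧ v r ≤ 0 := by
  simp [posEnergy, add_eq_zero_iff_of_nonneg]

theorem ContinuousOn.posEnergy {s : Set ℝ} (hu : ContinuousOn u s) (hv : ContinuousOn v s) :
    ContinuousOn (posEnergy u v) s :=
  ((hu.sup continuousOn_const).pow 2).add ((hv.sup continuousOn_const).pow 2)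

theorem tendsto_posEnergy_atTop (hu : Tendsto u atTop (𝓝 0)) (hv : Tendsto v atTop (𝓝 0)) :
    Tendsto (posEnergy u v) atTop (𝓝 0) := by
  unfold posEnergy
  have h0 : Tendsto (fun _ : ℝ => (0 : ℝ)) atTop (𝓝 0) := tendsto_const_nhds
  simpa using ((hu.max h0).pow 2).add ((hv.max h0).pow 2)

/-- `α u s + β v s ≤ α u⁺ s + β v⁺ s ≤ (E r + E s) / 2` by `2 a x ≤ a² + x²`,
and `E r = α u r + β v r`. -/
theorem isLocalMax_posPart_pairing {r : ℝ} (h : IsLocalMax (posEnergy u v) r) :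
    IsLocalMax (fun s => max (u r) 0 * u s + max (v r) 0 * v s) r := by
  filter_upwards [h] with s hs
  unfold posEnergy at hs
  nlinarith [sq_nonneg (max (u r) 0 - max (u s) 0), sq_nonneg (max (v r) 0 - max (v s) 0),
    mul_le_mul_of_nonneg_left (le_max_left (u s) 0) (le_max_right (u r) 0),
    mul_le_mul_of_nonneg_left (le_max_left (v s) 0) (le_max_right (v r) 0),
    max_zero_mul_self (u r), max_zero_mul_self (v r)]

end posEnergy

theorem posEnergy_eq_zero_of_isLocalMax {u v : ℝ → ℝ} {r δ a b c d : ℝ}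
    (hu : ContDiffAt ℝ 2 u r) (hv : ContDiffAt ℝ 2 v r) (hmax : IsLocalMax (posEnergy u v) r)
    (hδ : 0 < δ) (hb : b ≤ 0) (hc : c ≤ 0)
    (hquad : ∀ x y : ℝ, a * x ^ 2 + (b + c) * x * y + d * y ^ 2 ≥ δ * (x ^ 2 + y ^ 2))
    (h₁ : -(radLap u r) + u r / r ^ 2 + a * u r + b * v r ≤ 0)
    (h₂ : -(radLap v r) + v r / r ^ 2 + c * u r + d * v r ≤ 0) :
    posEnergy u v r = 0 := by
  set α := max (u r) 0
  set β := max (v r) 0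
  have hlap : α * radLap u r + β * radLap v r ≤ 0 := by
    rw [← radLap_linear_combination α β hu hv]
    exact radLap_nonpos_of_isLocalMax (isLocalMax_posPart_pairing hmax)
      ((continuousAt_const.mul hu.continuousAt).add (continuousAt_const.mul hv.continuousAt))
  have hcoerc : δ * (α ^ 2 + β ^ 2) ≤ α * (a * u r + b * v r) + β * (c * u r + d * v r) :=
    (hquad α β).trans (quadForm_max_zero_le hb hc)
  have hpotential : 0 ≤ α * (u r / r ^ 2) + β * (v r / r ^ 2) := by
    rw [← mul_div_assoc, ← mul_div_assoc, max_zero_mul_self, max_zero_mul_self]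
    positivity
  have hα := mul_le_mul_of_nonneg_left h₁ (le_max_right (u r) 0)
  have hβ := mul_le_mul_of_nonneg_left h₂ (le_max_right (v r) 0)
  have hE : δ * posEnergy u v r ≤ 0 := by
    unfold posEnergy
    linarith
  exact le_antisymm (nonpos_of_mul_nonpos_right hE hδ) (posEnergy_nonneg u v r)

theorem stmt16_general (R δ : ℝ) (hδ : 1 / (2 * R ^ 2) < δ)
    (A B C D : ℝ → ℝ)
    (hB : ∀ r ≥ R, B r ≤ 0) (hC : ∀ r ≥ R, C r ≤ 0)
    (hquad : ∀ r ≥ R, ∀ x y : ℝ,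
      A r * x ^ 2 + (B r + C r) * x * y + D r * y ^ 2 ≥ δ * (x ^ 2 + y ^ 2))
    (u v : ℝ → ℝ)
    (hu : ContDiffOn ℝ 2 u (Set.Ici R)) (hv : ContDiffOn ℝ 2 v (Set.Ici R))
    (hineq1 : ∀ r ∈ Set.Ioi R, -(radLap u r) + u r / r ^ 2 + A r * u r + B r * v r ≤ 0)
    (hineq2 : ∀ r ∈ Set.Ioi R, -(radLap v r) + v r / r ^ 2 + C r * u r + D r * v r ≤ 0)
    (huR : u R ≤ 0) (hvR : v R ≤ 0)
    (hul : Filter.Tendsto u Filter.atTop (nhds 0))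
    (hvl : Filter.Tendsto v Filter.atTop (nhds 0)) :
    ∀ r ≥ R, u r ≤ 0 ∧ v r ≤ 0 := by
  suffices ∀ r ≥ R, posEnergy u v r = 0 from fun r hr => posEnergy_eq_zero_iff.1 (this r hr)
  by_contra! ⟨r₁, hr₁, hne⟩
  have hδ₀ : 0 < δ := lt_of_le_of_lt (by positivity) hδ
  obtain ⟨r₀, hr₀, hmax⟩ := exists_isMaxOn_Ici_of_tendsto
    (hu.continuousOn.posEnergy hv.continuousOn) (tendsto_posEnergy_atTop hul hvl) hr₁
    ((posEnergy_nonneg u v r₁).lt_of_ne' hne)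
  have hzero : posEnergy u v r₀ = 0 := by
    rcases (mem_Ici.1 hr₀).eq_or_lt with rfl | hR₀
    · exact posEnergy_eq_zero_iff.2 ⟨huR, hvR⟩
    have hnhds : Ici R ∈ 𝓝 r₀ := Ici_mem_nhds hR₀
    exact posEnergy_eq_zero_of_isLocalMax (hu.contDiffAt hnhds) (hv.contDiffAt hnhds)
      (hmax.isLocalMax hnhds) hδ₀ (hB r₀ hr₀) (hC r₀ hr₀) (hquad r₀ hr₀)
      (hineq1 r₀ hR₀) (hineq2 r₀ hR₀)
  exact hne (le_antisymm (hzero ▸ hmax hr₁) (posEnergy_nonneg u v r₁))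

theorem stmt16 (R δ : ℝ) (hR : 0 < R) (hδ : 1 / (2 * R ^ 2) < δ)
    (A B C D : ℝ → ℝ)
    (hbdd : ∃ M : ℝ, ∀ r ≥ R, |A r| ≤ M ∧ |B r| ≤ M ∧ |C r| ≤ M ∧ |D r| ≤ M)
    (hA : ∀ r ≥ R, 0 < A r) (hD : ∀ r ≥ R, 0 < D r)
    (hB : ∀ r ≥ R, B r ≤ 0) (hC : ∀ r ≥ R, C r ≤ 0)
    (hquad : ∀ r ≥ R, ∀ x y : ℝ,
      A r * x ^ 2 + (B r + C r) * x * y + D r * y ^ 2 ≥ δ * (x ^ 2 + y ^ 2))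
    (u v : ℝ → ℝ)
    (hu : ContDiffOn ℝ 2 u (Set.Ici R)) (hv : ContDiffOn ℝ 2 v (Set.Ici R))
    (huvbd : ∃ M : ℝ, ∀ r ≥ R,
      |u r| ≤ M ∧ |v r| ≤ M ∧ |deriv u r| ≤ M ∧ |deriv v r| ≤ M)
    (hineq1 : ∀ r ∈ Set.Ioi R, -(radLap u r) + u r / r ^ 2 + A r * u r + B r * v r ≤ 0)
    (hineq2 : ∀ r ∈ Set.Ioi R, -(radLap v r) + v r / r ^ 2 + C r * u r + D r * v r ≤ 0)
    (huR : u R ≤ 0) (hvR : v R ≤ 0)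
    (hul : Filter.Tendsto u Filter.atTop (nhds 0))
    (hvl : Filter.Tendsto v Filter.atTop (nhds 0)) :
    ∀ r ≥ R, u r ≤ 0 ∧ v r ≤ 0 :=
  stmt16_general R δ hδ A B C D hB hC hquad u v hu hv hineq1 hineq2 huR hvR hul hvl
end

section
/- Let g : [0,∞) → ℝ be a nonnegative C¹ function such that |g'(r)| ≤ C(1 + r) for some constant C > 0 and all r ≥ 0, and such that ∫₀^∞ g(r) r dr < ∞. Then g(r) → 0 as r → ∞. -/
/-!
If `g r ≥ ε` at a large `r`, the bound `|g'(x)| ≤ C (1 + x)` keeps `g ≥ ε / 2` on an interval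
`[r, r + δ]` with `δ ≍ ε / (C r)`. There the weight `x` is at least `r`, so this interval
contributes at least `(ε / 2) r δ ≳ ε² / C` to `∫ g(x) x dx`, independently of `r`. As the tails
of a finite integral tend to zero, `g ≥ ε` can only happen on a bounded set.
-/

open MeasureTheory Set Filter Topology
open scoped ENNReal

theorem tendsto_setLIntegral_Ioi_atTop_zero {f : ℝ → ℝ≥0∞} {a : ℝ}
    (hf : ∫⁻ x in Ioi a, f x ≠ ∞) :
    Tendsto (fun R => ∫⁻ x in Ioi R, f x) atTop (𝓝 0) := by
  have h := tendsto_measure_iInter_atTop (μ := volume.withDensity f) (s := Ioi)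
    (fun _ => measurableSet_Ioi.nullMeasurableSet) (fun _ _ h => Ioi_subset_Ioi h)
    ⟨a, by rwa [withDensity_apply _ measurableSet_Ioi]⟩
  have hempty : ⋂ R : ℝ, Ioi R = ∅ :=
    eq_empty_of_forall_notMem fun x hx => lt_irrefl x (mem_iInter.1 hx x)
  simpa [Function.comp_def, withDensity_apply _ measurableSet_Ioi, hempty] using h

theorem ofReal_le_setLIntegral_Ioc_of_abs_deriv_le {g : ℝ → ℝ} {r δ M ε : ℝ} (hr : 0 ≤ r)
    (hδ : 0 < δ) (hdiff : ∀ x ∈ Icc r (r + δ), DifferentiableAt ℝ g x)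
    (hderiv : ∀ x ∈ Ico r (r + δ), |deriv g x| ≤ M) (hMδ : M * δ ≤ ε / 2) (hgr : ε ≤ g r) :
    ENNReal.ofReal (ε / 2 * r * δ) ≤ ∫⁻ x in Ioc r (r + δ), ENNReal.ofReal (g x * x) := by
  have hM : 0 ≤ M := (abs_nonneg _).trans (hderiv r ⟨le_rfl, by linarith⟩)
  have hε : 0 ≤ ε / 2 := (mul_nonneg hM hδ.le).trans hMδ
  have hlip : ∀ x ∈ Icc r (r + δ), ‖g x - g r‖ ≤ M * (x - r) :=
    norm_image_sub_le_of_norm_deriv_le_segment'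
      (fun x hx => (hdiff x hx).hasDerivAt.hasDerivWithinAt) hderiv
  have hlow : ∀ x ∈ Ioc r (r + δ), ε / 2 * r ≤ g x * x := by
    intro x hx
    have hgx : |g x - g r| ≤ M * δ :=
      (hlip x (Ioc_subset_Icc_self hx)).trans
        (mul_le_mul_of_nonneg_left (by linarith [hx.2]) hM)
    have hgx' : ε / 2 ≤ g x := by linarith [neg_abs_le (g x - g r)]
    exact mul_le_mul hgx' hx.1.le hr (hε.trans hgx')
  calc ENNReal.ofReal (ε / 2 * r * δ)
      = ∫⁻ _ in Ioc r (r + δ), ENNReal.ofReal (ε / 2 * r) := by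
        rw [setLIntegral_const, Real.volume_Ioc, add_sub_cancel_left, ENNReal.ofReal_mul' hδ.le]
    _ ≤ ∫⁻ x in Ioc r (r + δ), ENNReal.ofReal (g x * x) :=
        setLIntegral_mono' measurableSet_Ioc fun x hx => ENNReal.ofReal_le_ofReal (hlow x hx)

theorem ofReal_le_setLIntegral_Ioi_of_le_apply {g : ℝ → ℝ} {C ε r : ℝ}
    (hdiff : ∀ x > 0, DifferentiableAt ℝ g x) (hderiv : ∀ x ≥ 0, |deriv g x| ≤ C * (1 + x))
    (hε : 0 < ε) (hr : 2 ≤ r) (hgr : ε ≤ g r) :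
    ENNReal.ofReal (ε ^ 2 / (8 * (C + ε))) ≤ ∫⁻ x in Ioi r, ENNReal.ofReal (g x * x) := by
  have hC : 0 ≤ C := by simpa using (abs_nonneg _).trans (hderiv 0 le_rfl)
  -- `C + ε` rather than `C` makes `δ ≤ 1`, so that `M` bounds `|g'|` on `[r, r + δ]`.
  set M := (C + ε) * (2 + r)
  set δ := ε / (2 * M)
  have hM : 0 < M := by positivity
  have hδ : 0 < δ := by positivity
  have hMδ : M * δ = ε / 2 := by simp only [δ]; field_simp
  have hδ1 : δ ≤ 1 := by
    rw [div_le_one (by positivity)]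
    nlinarith
  have hderivM : ∀ x ∈ Ico r (r + δ), |deriv g x| ≤ M := fun x hx =>
    calc |deriv g x| ≤ C * (1 + x) := hderiv x (by linarith [hx.1])
      _ ≤ M := by nlinarith [hx.2]
  have hrδ : ε / (4 * (C + ε)) ≤ r * δ := by
    simp only [δ, M]
    rw [div_le_iff₀ (by positivity)]
    field_simp
    nlinarith
  calc ENNReal.ofReal (ε ^ 2 / (8 * (C + ε)))
      ≤ ENNReal.ofReal (ε / 2 * r * δ) := by
        refine ENNReal.ofReal_le_ofReal ?_
        calc ε ^ 2 / (8 * (C + ε)) = ε / 2 * (ε / (4 * (C + ε))) := by field_simp; ring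
          _ ≤ ε / 2 * (r * δ) := by gcongr
          _ = ε / 2 * r * δ := by ring
    _ ≤ ∫⁻ x in Ioc r (r + δ), ENNReal.ofReal (g x * x) :=
        ofReal_le_setLIntegral_Ioc_of_abs_deriv_le (by linarith) hδ
          (fun x hx => hdiff x (by linarith [hx.1])) hderivM hMδ.le hgr
    _ ≤ ∫⁻ x in Ioi r, ENNReal.ofReal (g x * x) := lintegral_mono_set Ioc_subset_Ioi_self

theorem stmt17 (g : ℝ → ℝ) (hpos : ∀ r ≥ (0 : ℝ), 0 ≤ g r)
    (hC1 : ContDiffOn ℝ 1 g (Set.Ici 0))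
    (hderiv : ∃ C > (0 : ℝ), ∀ r ≥ (0 : ℝ), |deriv g r| ≤ C * (1 + r))
    (hint : ∫⁻ r in Set.Ioi (0 : ℝ), ENNReal.ofReal (g r * r) < ⊤) :
    Filter.Tendsto g Filter.atTop (nhds 0) := by
  obtain ⟨C, hC, hgC⟩ := hderiv
  have hdiff : ∀ x > 0, DifferentiableAt ℝ g x := fun x hx =>
    (hC1.differentiableOn one_ne_zero x hx.le).differentiableAt (Ici_mem_nhds hx)
  have htail := tendsto_setLIntegral_Ioi_atTop_zero hint.ne
  refine tendsto_order.2
    ⟨fun a ha => (eventually_ge_atTop 0).mono fun r hr => ha.trans_le (hpos r hr), fun ε hε => ?_⟩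
  by_contra hfreq
  simp only [not_eventually, not_lt] at hfreq
  have hc : (0 : ℝ≥0∞) < ENNReal.ofReal (ε ^ 2 / (8 * (C + ε))) :=
    ENNReal.ofReal_pos.2 (by positivity)
  obtain ⟨r, hgr, hr, hsmall⟩ := (hfreq.and_eventually
    ((eventually_ge_atTop 2).and (htail.eventually (gt_mem_nhds hc)))).exists
  exact (ofReal_le_setLIntegral_Ioi_of_le_apply hdiff hgC hε hr hgr).not_gt hsmall
end
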